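/- Under the same asymptotic exponential tightness assumption with compact $\mathcal{K}_l \subset \mathcal{P}(X)$ and compact $K_{l,\varepsilon} \subset X$ with $\nu(K_{l,\varepsilon}^C) < \varepsilon$ for all $\nu \in \mathcal{K}_l$, the rate function $I(\sigma) = \sup_{V\in C_b(X)}(\langle V,\sigma\rangle - \Lambda(V))$ satisfies $I(\sigma) \ge (\sigma(K_{l,\varepsilon}^C) - \varepsilon) \cdot l$ for every $\sigma \in \mathcal{P}(X)$ and all $l, \varepsilon > 0$. -/

import Mathlib

/-!
Test the rate function against `V_r = l · (1 - 1_K^{(r)})`, where `1_K^{(r)}` is the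
`r`-thickened indicator of `K`. This function vanishes on `K`, lies between `0` and `l`, and
equals `l` off the `r`-thickening of `K`, so the pressure bound gives `Λ(V_r) ≤ ε l` while
Markov's inequality gives `⟨V_r, σ⟩ ≥ l · σ((K_r)ᶜ)`. Hence `I(σ) ≥ (σ((K_r)ᶜ) - ε) l`, and
`σ((K_r)ᶜ) → σ(Kᶜ)` as `r → 0` because `K` is closed.
-/

open MeasureTheory BoundedContinuousFunction Metric Filter Set
open scoped NNReal Topology

section Cutoff

variable {X : Type*} [PseudoEMetricSpace X]

noncomputable def thickeningCutoff {r : ℝ} (hr : 0 < r) (K : Set X) (l : ℝ) : X →ᵇ ℝ :=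
  l • (1 - (thickenedIndicator hr K).comp ((↑) : ℝ≥0 → ℝ) NNReal.isometry_coe.lipschitz)

variable {r : ℝ} (hr : 0 < r) (K : Set X) {l : ℝ}

theorem thickeningCutoff_apply (x : X) :
    thickeningCutoff hr K l x = l * (1 - thickenedIndicator hr K x) := by
  simp [thickeningCutoff]

theorem thickeningCutoff_nonneg (hl : 0 ≤ l) (x : X) : 0 ≤ thickeningCutoff hr K l x := by
  rw [thickeningCutoff_apply]
  exact mul_nonneg hl (sub_nonneg.2 (mod_cast thickenedIndicator_le_one hr K x))

theorem thickeningCutoff_le (hl : 0 ≤ l) (x : X) : thickeningCutoff hr K l x ≤ l := by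
  rw [thickeningCutoff_apply]
  exact mul_le_of_le_one_right hl (sub_le_self _ (thickenedIndicator hr K x).2)

theorem thickeningCutoff_eq_zero_of_mem {x : X} (hx : x ∈ K) : thickeningCutoff hr K l x = 0 := by
  simp [thickeningCutoff_apply, thickenedIndicator_one hr K hx]

theorem thickeningCutoff_eq_of_notMem_thickening {x : X} (hx : x ∉ thickening r K) :
    thickeningCutoff hr K l x = l := by
  simp [thickeningCutoff_apply, thickenedIndicator_zero hr K hx]

end Cutoff

theorem max_sSup_image_iSup_le_of_eqOn_zero {X : Type*} {V : X → ℝ} {K : Set X} {l ε : ℝ}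
    (hε : 0 ≤ ε) (hl : 0 ≤ l) (hV₀ : ∀ x, 0 ≤ V x) (hVl : ∀ x, V x ≤ l) (hVK : EqOn V 0 K) :
    max ((1 - ε) * sSup (V '' K) + ε * ⨆ x, V x) ((⨆ x, V x) - l) ≤ ε * l := by
  have hsupK : sSup (V '' K) = 0 :=
    le_antisymm (Real.sSup_nonpos <| forall_mem_image.2 fun x hx ↦ (hVK hx).le)
      (Real.sSup_nonneg <| forall_mem_image.2 fun x _ ↦ hV₀ x)
  have hsup : (⨆ x, V x) ≤ l := Real.iSup_le hVl hl
  rw [hsupK]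
  refine max_le ?_ ?_ <;> nlinarith

theorem tendsto_measureReal_compl_thickening {X : Type*} [PseudoEMetricSpace X]
    [MeasurableSpace X] [OpensMeasurableSpace X] (μ : Measure X) [IsFiniteMeasure μ]
    {K : Set X} (hK : IsClosed K) :
    Tendsto (fun r ↦ μ.real (thickening r K)ᶜ) (𝓝[>] 0) (𝓝 (μ.real Kᶜ)) := by
  have h := (ENNReal.tendsto_toReal (measure_ne_top μ K)).comp
    (tendsto_measure_thickening_of_isClosed ⟨1, one_pos, measure_ne_top μ _⟩ hK)
  simp_rw [measureReal_compl hK.measurableSet, measureReal_compl isOpen_thickening.measurableSet]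
  exact tendsto_const_nhds.sub h

theorem mul_measureReal_compl_thickening_le_integral_thickeningCutoff {X : Type*}
    [PseudoEMetricSpace X] [MeasurableSpace X] [BorelSpace X] (μ : Measure X) [IsFiniteMeasure μ]
    {r : ℝ} (hr : 0 < r) (K : Set X) {l : ℝ} (hl : 0 ≤ l) :
    l * μ.real (thickening r K)ᶜ ≤ ∫ x, thickeningCutoff hr K l x ∂μ := by
  refine le_trans ?_ (mul_meas_ge_le_integral_of_nonneg
    (.of_forall (thickeningCutoff_nonneg hr K hl)) ((thickeningCutoff hr K l).integrable μ) l)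
  refine mul_le_mul_of_nonneg_left (measureReal_mono fun x hx ↦ ?_) hl
  exact (thickeningCutoff_eq_of_notMem_thickening hr K hx).ge

theorem rate_function_lower_bound_of_pressure_bound_general {X : Type*} [MetricSpace X]
    [MeasurableSpace X] [BorelSpace X]
    (Λ : (X →ᵇ ℝ) → ℝ)
    (l : ℝ) (hl : 0 < l) (ε : ℝ) (hε : 0 < ε)
    (K : Set X) (hK : IsCompact K)
    (hΛ : ∀ V : X →ᵇ ℝ,
      Λ V ≤ max ((1 - ε) * sSup (V '' K) + ε * ⨆ x, V x) ((⨆ x, V x) - l)) :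
    ∀ σ : ProbabilityMeasure X,
      (((((σ : Measure X) Kᶜ).toReal - ε) * l : ℝ) : EReal)
        ≤ ⨆ V : X →ᵇ ℝ, (((∫ x, V x ∂(σ : Measure X)) - Λ V : ℝ) : EReal) := by
  intro σ
  set μ : Measure X := σ.toMeasure
  have hlim : Tendsto (fun r ↦ (((μ.real (thickening r K)ᶜ - ε) * l : ℝ) : EReal)) (𝓝[>] 0)
      (𝓝 (((μ.real Kᶜ - ε) * l : ℝ) : EReal)) :=
    EReal.tendsto_coe.2 <|
      ((tendsto_measureReal_compl_thickening μ hK.isClosed).sub_const ε).mul_const l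
  refine le_of_tendsto hlim (eventually_nhdsWithin_of_forall fun r (hr : 0 < r) ↦ ?_)
  set V := thickeningCutoff hr K l
  have hΛV : Λ V ≤ ε * l := (hΛ V).trans <| max_sSup_image_iSup_le_of_eqOn_zero hε.le hl.le
    (thickeningCutoff_nonneg hr K hl.le) (thickeningCutoff_le hr K hl.le)
    (fun x hx ↦ thickeningCutoff_eq_zero_of_mem hr K hx)
  have hint := mul_measureReal_compl_thickening_le_integral_thickeningCutoff μ hr K hl.le
  refine le_trans ?_ (le_iSup (fun V : X →ᵇ ℝ ↦ (((∫ x, V x ∂μ) - Λ V : ℝ) : EReal)) V)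
  exact EReal.coe_le_coe_iff.2 (by linarith)

/-- Given the pressure bound `Λ(V) ≤ max{(1-ε) sup_K V + ε sup_X V, sup_X V - l}` for all
`V ∈ C_b(X)` (a consequence of asymptotic exponential tightness), the rate function
`I(σ) = sup_V (⟨V,σ⟩ - Λ(V))` satisfies `I(σ) ≥ (σ(Kᶜ) - ε)·l` for every `σ ∈ P(X)`. -/
theorem rate_function_lower_bound_of_pressure_bound {X : Type*} [MetricSpace X]
    [PolishSpace X] [MeasurableSpace X] [BorelSpace X]
    (Λ : (X →ᵇ ℝ) → ℝ)
    (l : ℝ) (hl : 0 < l) (ε : ℝ) (hε : 0 < ε)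
    (K : Set X) (hK : IsCompact K) (hKne : K.Nonempty)
    (hΛ : ∀ V : X →ᵇ ℝ,
      Λ V ≤ max ((1 - ε) * sSup (V '' K) + ε * ⨆ x, V x) ((⨆ x, V x) - l)) :
    ∀ σ : ProbabilityMeasure X,
      (((((σ : Measure X) Kᶜ).toReal - ε) * l : ℝ) : EReal)
        ≤ ⨆ V : X →ᵇ ℝ, (((∫ x, V x ∂(σ : Measure X)) - Λ V : ℝ) : EReal) :=
  rate_function_lower_bound_of_pressure_bound_general Λ l hl ε hε K hK hΛ
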